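/- Let 0 < a < b be reals, n ∈ ℕ with n > 2, and p, q > 1 with 1/p + 1/q = 1. Then |((a+b)/2)^n - (b^{n+1} - a^{n+1})/((n+1)(b-a))| ≤ (n(n-1)(b-a)²/16)(1/(p+1))^{1/p}(1/(2(q+2)))^{1/q} [ ( b^{(n-2)q} + ((q+3)/(q+1)) a^{(n-2)q} )^{1/q} + ( ((q+3)/(q+1)) b^{(n-2)q} + a^{(n-2)q} )^{1/q} ]. -/

import Mathlib

/-!
Write `h = (b - a) / 2`. Integrating `t² f''(x + t d)` by parts twice over `[0, 1]`, once from
`a` towards the midpoint (`d = h`) and once from `b` (`d = -h`), and adding, gives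
`f((a+b)/2) - ⨍ f = -(h² / 4) (∫₀¹ t² f''(a + t h) dt + ∫₀¹ t² f''(b - t h) dt)`.
Each integral is bounded by Hölder's inequality applied to `t · (t |f''|)`, and then
`∫₀¹ t^q |f''|^q` by the convexity of `|f''|^q` along the half-segment, since
`∫₀¹ t^q ((1 - t/2) u + (t/2) v) dt = ((q+3)/(q+1) u + v) / (2(q+2))`.
For `f = x^n` one has `|f''|^q = (n(n-1))^q x^((n-2)q)`, which is convex once `(n-2)q ≥ 1`.
-/

open MeasureTheory Set intervalIntegral

lemma add_mul_mem_uIcc {x d t : ℝ} (ht : t ∈ Icc (0 : ℝ) 1) : x + t * d ∈ uIcc x (x + d) := by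
  rw [← segment_eq_uIcc, segment_eq_image']
  exact ⟨t, ht, by simp⟩

lemma add_mul_half_sub_mem_uIcc {x y t : ℝ} (ht : t ∈ Icc (0 : ℝ) 1) :
    x + t * ((y - x) / 2) ∈ uIcc x y := by
  have := add_mul_mem_uIcc (x := x) (d := y - x) (t := t / 2)
    ⟨by linarith [ht.1], by linarith [ht.2]⟩
  rwa [add_sub_cancel, div_mul_eq_mul_div, mul_div_assoc] at this

lemma ContinuousOn.comp_add_mul {g : ℝ → ℝ} {x d : ℝ} (hg : ContinuousOn g (uIcc x (x + d))) :
    ContinuousOn (fun t ↦ g (x + t * d)) (Icc 0 1) :=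
  hg.comp (by fun_prop) fun _ ht ↦ add_mul_mem_uIcc ht

theorem integral_sq_mul_deriv2_comp {f f' f'' : ℝ → ℝ} {x d : ℝ}
    (hf : ∀ y ∈ uIcc x (x + d), HasDerivAt f (f' y) y)
    (hf' : ∀ y ∈ uIcc x (x + d), HasDerivAt f' (f'' y) y)
    (hf'' : ContinuousOn f'' (uIcc x (x + d))) :
    d ^ 2 * ∫ t in 0..1, t ^ 2 * f'' (x + t * d)
      = d * f' (x + d) - 2 * f (x + d) + 2 * ∫ t in 0..1, f (x + t * d) := by
  have hline : ∀ t : ℝ, HasDerivAt (fun t ↦ x + t * d) d t := fun t ↦ by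
    simpa using ((hasDerivAt_id t).mul_const d).const_add x
  have hderiv : ∀ t ∈ uIcc (0 : ℝ) 1, HasDerivAt
      (fun t ↦ t ^ 2 * d * f' (x + t * d) - 2 * t * f (x + t * d))
      (d ^ 2 * (t ^ 2 * f'' (x + t * d)) - 2 * f (x + t * d)) t := by
    intro t ht
    rw [uIcc_of_le zero_le_one] at ht
    have hy := add_mul_mem_uIcc (d := d) (x := x) ht
    have h₁ := ((hasDerivAt_pow 2 t).mul_const d).mul ((hf' _ hy).comp t (hline t))
    have h₂ := ((hasDerivAt_id t).const_mul 2).mul ((hf _ hy).comp t (hline t))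
    refine (h₁.sub h₂).congr_deriv ?_
    simp only [Function.comp_apply, id, Nat.cast_ofNat]
    ring
  have hI₁ : IntervalIntegrable (fun t ↦ t ^ 2 * f'' (x + t * d)) volume 0 1 :=
    (continuous_pow 2).intervalIntegrable 0 1 |>.mul_continuousOn
      (by rw [uIcc_of_le zero_le_one]; exact hf''.comp_add_mul)
  have hI₂ : IntervalIntegrable (fun t ↦ f (x + t * d)) volume 0 1 :=
    (ContinuousOn.comp_add_mul (fun y hy ↦ (hf y hy).continuousAt.continuousWithinAt)).mono
      (by rw [uIcc_of_le zero_le_one]) |>.intervalIntegrable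
  have hFTC := integral_eq_sub_of_hasDerivAt hderiv ((hI₁.const_mul _).sub (hI₂.const_mul 2))
  rw [integral_sub (hI₁.const_mul _) (hI₂.const_mul 2), intervalIntegral.integral_const_mul,
    intervalIntegral.integral_const_mul] at hFTC
  simp only [one_pow, one_mul, zero_pow two_ne_zero, zero_mul, mul_zero, sub_zero] at hFTC
  linarith

lemma integral_comp_add_mul_unitInterval (f : ℝ → ℝ) (x : ℝ) {d : ℝ} (hd : d ≠ 0) :
    ∫ t in 0..1, f (x + t * d) = d⁻¹ * ∫ y in x..x + d, f y := by
  simpa [mul_comm] using integral_comp_add_mul f hd x (a := 0) (b := 1)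

theorem midpoint_sub_average_eq {f f' f'' : ℝ → ℝ} {a b : ℝ} (hab : a < b)
    (hf : ∀ y ∈ Icc a b, HasDerivAt f (f' y) y)
    (hf' : ∀ y ∈ Icc a b, HasDerivAt f' (f'' y) y)
    (hf'' : ContinuousOn f'' (Icc a b)) :
    f ((a + b) / 2) - ⨍ y in a..b, f y
      = -((b - a) ^ 2 / 16) * ((∫ t in 0..1, t ^ 2 * f'' (a + t * ((b - a) / 2)))
          + ∫ t in 0..1, t ^ 2 * f'' (b + t * ((a - b) / 2))) := by
  have hM₁ : a + (b - a) / 2 = (a + b) / 2 := by ring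
  have hM₂ : b + (a - b) / 2 = (a + b) / 2 := by ring
  have hsub₁ : uIcc a (a + (b - a) / 2) ⊆ Icc a b := by
    rw [uIcc_of_le (by linarith)]; exact Icc_subset_Icc_right (by linarith)
  have hsub₂ : uIcc b (b + (a - b) / 2) ⊆ Icc a b := by
    rw [uIcc_of_ge (by linarith)]; exact Icc_subset_Icc_left (by linarith)
  have e₁ := integral_sq_mul_deriv2_comp (fun y hy ↦ hf y (hsub₁ hy))
    (fun y hy ↦ hf' y (hsub₁ hy)) (hf''.mono hsub₁)
  have e₂ := integral_sq_mul_deriv2_comp (fun y hy ↦ hf y (hsub₂ hy))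
    (fun y hy ↦ hf' y (hsub₂ hy)) (hf''.mono hsub₂)
  have hfc : ContinuousOn f (Icc a b) := fun y hy ↦ (hf y hy).continuousAt.continuousWithinAt
  have hsplit : ∫ y in a..b, f y = (∫ y in a..(a + b) / 2, f y) + ∫ y in (a + b) / 2..b, f y :=
    (integral_add_adjacent_intervals (hfc.mono (hM₁ ▸ hsub₁)).intervalIntegrable
      (hfc.mono (by rw [← hM₂, uIcc_comm]; exact hsub₂)).intervalIntegrable).symm
  rw [integral_comp_add_mul_unitInterval f a (by linarith : (b - a) / 2 ≠ 0), hM₁] at e₁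
  rw [integral_comp_add_mul_unitInterval f b (by linarith : (a - b) / 2 ≠ 0), hM₂,
    integral_symm ((a + b) / 2) b] at e₂
  rw [interval_average_eq, smul_eq_mul, hsplit]
  have hba : b - a ≠ 0 := by linarith
  have hab' : a - b ≠ 0 := by linarith
  linear_combination (norm := (field_simp; ring)) (1 / 4) * (e₁ + e₂)

lemma ContinuousOn.memLp_restrict_Ioc {f : ℝ → ℝ} {a b : ℝ} (hf : ContinuousOn f (Icc a b))
    (p : ENNReal) : MemLp f p (volume.restrict (Ioc a b)) := by
  obtain ⟨C, hC⟩ := isCompact_Icc.exists_bound_of_continuousOn hf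
  exact MemLp.of_bound ((hf.mono Ioc_subset_Icc_self).aestronglyMeasurable measurableSet_Ioc) C
    (ae_restrict_of_forall_mem measurableSet_Ioc fun x hx ↦ hC x (Ioc_subset_Icc_self hx))

lemma integral_rpow_unitInterval {r : ℝ} (hr : -1 < r) :
    ∫ t in (0 : ℝ)..1, t ^ r = 1 / (r + 1) := by
  rw [integral_rpow (Or.inl hr), Real.one_rpow, Real.zero_rpow (by linarith), sub_zero]

theorem integral_sq_mul_le_of_holderConjugate {p q : ℝ} (hpq : p.HolderConjugate q)
    {g : ℝ → ℝ} (hg : ContinuousOn g (Icc 0 1)) (hg₀ : ∀ t ∈ Icc (0 : ℝ) 1, 0 ≤ g t) :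
    ∫ t in 0..1, t ^ 2 * g t
      ≤ (1 / (p + 1)) ^ (1 / p) * (∫ t in 0..1, t ^ q * g t ^ q) ^ (1 / q) := by
  have hIoc : ∀ t ∈ Ioc (0 : ℝ) 1, t ∈ Icc (0 : ℝ) 1 := fun _ ht ↦ Ioc_subset_Icc_self ht
  have hholder := integral_mul_le_Lp_mul_Lq_of_nonneg (μ := volume.restrict (Ioc 0 1)) hpq
    (f := fun t ↦ t) (g := fun t ↦ t * g t)
    (ae_restrict_of_forall_mem measurableSet_Ioc fun t ht ↦ (hIoc t ht).1)
    (ae_restrict_of_forall_mem measurableSet_Ioc fun t ht ↦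
      mul_nonneg (hIoc t ht).1 (hg₀ t (hIoc t ht)))
    (continuousOn_id.memLp_restrict_Ioc _) ((continuousOn_id.mul hg).memLp_restrict_Ioc _)
  have hsq : ∫ t in Ioc (0 : ℝ) 1, t * (t * g t) = ∫ t in 0..1, t ^ 2 * g t := by
    rw [integral_of_le zero_le_one]
    exact setIntegral_congr_fun measurableSet_Ioc fun t _ ↦ by ring
  have hp : ∫ t in Ioc (0 : ℝ) 1, t ^ p = 1 / (p + 1) := by
    rw [← integral_of_le zero_le_one, integral_rpow_unitInterval (by linarith [hpq.pos])]
  have hq : ∫ t in Ioc (0 : ℝ) 1, (t * g t) ^ q = ∫ t in 0..1, t ^ q * g t ^ q := by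
    rw [integral_of_le zero_le_one]
    exact setIntegral_congr_fun measurableSet_Ioc fun t ht ↦
      Real.mul_rpow (hIoc t ht).1 (hg₀ t (hIoc t ht))
  rwa [hsq, hp, hq] at hholder

theorem integral_rpow_mul_le_of_convexOn {q : ℝ} (hq : -1 < q) {φ : ℝ → ℝ} {x y : ℝ}
    (hφ : ConvexOn ℝ (uIcc x y) φ) (hφc : ContinuousOn φ (uIcc x y)) :
    ∫ t in 0..1, t ^ q * φ (x + t * ((y - x) / 2))
      ≤ ((q + 3) / (q + 1) * φ x + φ y) / (2 * (q + 2)) := by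
  have hle : ∀ t ∈ Icc (0 : ℝ) 1, t ^ q * φ (x + t * ((y - x) / 2))
      ≤ φ x * t ^ q + (φ y - φ x) / 2 * t ^ (q + 1) := fun t ht ↦ by
    have hconv := hφ.2 left_mem_uIcc right_mem_uIcc (show 0 ≤ 1 - t / 2 by linarith [ht.2])
      (show 0 ≤ t / 2 by linarith [ht.1]) (by ring)
    rw [smul_eq_mul, smul_eq_mul, smul_eq_mul, smul_eq_mul,
      show (1 - t / 2) * x + t / 2 * y = x + t * ((y - x) / 2) by ring] at hconv
    rw [Real.rpow_add_one' ht.1 (by linarith)]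
    nlinarith [mul_le_mul_of_nonneg_left hconv (Real.rpow_nonneg ht.1 q)]
  have hleft : IntervalIntegrable (fun t ↦ t ^ q * φ (x + t * ((y - x) / 2))) volume 0 1 :=
    (intervalIntegrable_rpow' hq).mul_continuousOn (by
      rw [uIcc_of_le zero_le_one]
      exact hφc.comp (by fun_prop) fun _ ht ↦ add_mul_half_sub_mem_uIcc ht)
  have hright₁ := (intervalIntegrable_rpow' (a := 0) (b := 1) hq).const_mul (φ x)
  have hright₂ := (intervalIntegrable_rpow' (a := 0) (b := 1) (r := q + 1) (by linarith)).const_mul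
    ((φ y - φ x) / 2)
  calc ∫ t in 0..1, t ^ q * φ (x + t * ((y - x) / 2))
      ≤ ∫ t in 0..1, φ x * t ^ q + (φ y - φ x) / 2 * t ^ (q + 1) :=
        integral_mono_on zero_le_one hleft (hright₁.add hright₂) hle
    _ = ((q + 3) / (q + 1) * φ x + φ y) / (2 * (q + 2)) := by
        rw [integral_add hright₁ hright₂, intervalIntegral.integral_const_mul,
          intervalIntegral.integral_const_mul, integral_rpow_unitInterval hq,
          integral_rpow_unitInterval (by linarith)]
        have : q + 1 ≠ 0 := by linarith
        have : q + 1 + 1 ≠ 0 := by linarith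
        have : q + 2 ≠ 0 := by linarith
        field_simp
        ring

theorem abs_integral_sq_mul_le {p q : ℝ} (hpq : p.HolderConjugate q) {g : ℝ → ℝ} {x y : ℝ}
    (hg : ContinuousOn g (uIcc x y)) (hgq : ConvexOn ℝ (uIcc x y) fun z ↦ |g z| ^ q) :
    |∫ t in 0..1, t ^ 2 * g (x + t * ((y - x) / 2))|
      ≤ (1 / (p + 1)) ^ (1 / p) * (1 / (2 * (q + 2))) ^ (1 / q)
        * (|g y| ^ q + (q + 3) / (q + 1) * |g x| ^ q) ^ (1 / q) := by
  have hq := hpq.symm.lt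
  have hgc : ContinuousOn (fun t ↦ |g (x + t * ((y - x) / 2))|) (Icc 0 1) :=
    (hg.comp (by fun_prop) fun _ ht ↦ add_mul_half_sub_mem_uIcc ht).abs
  have hW := integral_rpow_mul_le_of_convexOn (by linarith) hgq
    (hg.abs.rpow_const fun _ _ ↦ Or.inr (by linarith))
  calc |∫ t in 0..1, t ^ 2 * g (x + t * ((y - x) / 2))|
      ≤ ∫ t in 0..1, t ^ 2 * |g (x + t * ((y - x) / 2))| := by
        refine (abs_integral_le_integral_abs zero_le_one).trans_eq ?_
        simp only [abs_mul, abs_sq]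
    _ ≤ (1 / (p + 1)) ^ (1 / p)
          * (∫ t in 0..1, t ^ q * |g (x + t * ((y - x) / 2))| ^ q) ^ (1 / q) :=
        integral_sq_mul_le_of_holderConjugate hpq hgc fun _ _ ↦ abs_nonneg _
    _ ≤ (1 / (p + 1)) ^ (1 / p)
          * (((q + 3) / (q + 1) * |g x| ^ q + |g y| ^ q) / (2 * (q + 2))) ^ (1 / q) := by
        refine mul_le_mul_of_nonneg_left (Real.rpow_le_rpow ?_ hW hpq.symm.one_div_nonneg)
          (Real.rpow_nonneg (div_nonneg zero_le_one (by linarith [hpq.pos])) _)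
        exact intervalIntegral.integral_nonneg zero_le_one fun t ht ↦
          mul_nonneg (Real.rpow_nonneg ht.1 q) (Real.rpow_nonneg (abs_nonneg _) q)
    _ = _ := by
        have hc : 0 ≤ (q + 3) / (q + 1) := div_nonneg (by linarith) (by linarith)
        rw [div_eq_mul_one_div (_ + _), mul_comm (_ + _),
          Real.mul_rpow (div_nonneg zero_le_one (by linarith)) (by positivity),
          add_comm ((q + 3) / (q + 1) * |g x| ^ q)]
        ring

theorem abs_midpoint_sub_average_le {f f' f'' : ℝ → ℝ} {a b p q : ℝ} (hab : a < b)
    (hpq : p.HolderConjugate q)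
    (hf : ∀ y ∈ Icc a b, HasDerivAt f (f' y) y)
    (hf' : ∀ y ∈ Icc a b, HasDerivAt f' (f'' y) y)
    (hf'' : ContinuousOn f'' (Icc a b)) (hconv : ConvexOn ℝ (Icc a b) fun y ↦ |f'' y| ^ q) :
    |f ((a + b) / 2) - ⨍ y in a..b, f y|
      ≤ (b - a) ^ 2 / 16 * (1 / (p + 1)) ^ (1 / p) * (1 / (2 * (q + 2))) ^ (1 / q)
        * ((|f'' b| ^ q + (q + 3) / (q + 1) * |f'' a| ^ q) ^ (1 / q)
          + ((q + 3) / (q + 1) * |f'' b| ^ q + |f'' a| ^ q) ^ (1 / q)) := by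
  have hab' : uIcc a b = Icc a b := uIcc_of_le hab.le
  have hba' : uIcc b a = Icc a b := uIcc_of_ge hab.le
  have h₁ := abs_integral_sq_mul_le hpq (hab' ▸ hf'') (hab' ▸ hconv)
  have h₂ := abs_integral_sq_mul_le hpq (hba' ▸ hf'') (hba' ▸ hconv)
  rw [add_comm (|f'' a| ^ q)] at h₂
  rw [midpoint_sub_average_eq hab hf hf' hf'', abs_mul, abs_neg, abs_of_nonneg (by positivity)]
  exact (mul_le_mul_of_nonneg_left ((abs_add_le _ _).trans (add_le_add h₁ h₂))
    (by positivity)).trans_eq (by ring)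

lemma interval_average_pow (a b : ℝ) (n : ℕ) :
    ⨍ x in a..b, x ^ n = (b ^ (n + 1) - a ^ (n + 1)) / ((n + 1) * (b - a)) := by
  rw [interval_average_eq, integral_pow, smul_eq_mul, inv_mul_eq_div, div_div, mul_comm]

lemma abs_mul_pow_rpow {C x : ℝ} (hC : 0 ≤ C) (hx : 0 ≤ x) (m : ℕ) (q : ℝ) :
    |C * x ^ m| ^ q = C ^ q * x ^ ((m : ℝ) * q) := by
  rw [abs_of_nonneg (by positivity), Real.mul_rpow hC (by positivity), ← Real.rpow_natCast,
    ← Real.rpow_mul hx]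

lemma convexOn_abs_mul_pow_rpow {C q : ℝ} {m : ℕ} (hC : 0 ≤ C) (hmq : 1 ≤ (m : ℝ) * q) :
    ConvexOn ℝ (Ici 0) fun x ↦ |C * x ^ m| ^ q :=
  ((convexOn_rpow hmq).smul (Real.rpow_nonneg hC q)).congr fun _ hx ↦
    (abs_mul_pow_rpow hC hx m q).symm

lemma hasDerivAt_natCast_mul_pow_pred {n : ℕ} (hn : 1 ≤ n) (x : ℝ) :
    HasDerivAt (fun x ↦ (n : ℝ) * x ^ (n - 1)) (n * (n - 1) * x ^ (n - 2)) x :=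
  ((hasDerivAt_pow (n - 1) x).const_mul (n : ℝ)).congr_deriv (by
    rw [Nat.cast_sub hn, Nat.sub_sub]
    ring)

lemma rpow_mul_rpow_one_div {C Z q : ℝ} (hC : 0 ≤ C) (hZ : 0 ≤ Z) (hq : q ≠ 0) :
    (C ^ q * Z) ^ (1 / q) = C * Z ^ (1 / q) := by
  rw [Real.mul_rpow (Real.rpow_nonneg hC q) hZ, one_div, Real.rpow_rpow_inv hC hq]

theorem stmt_19_general (a b p q : ℝ) (n : ℕ) (ha : 0 < a) (hab : a < b) (hn : 2 < n)
    (hp : 1 < p) (hpq : 1/p + 1/q = 1) :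
    |((a+b)/2) ^ n - (b ^ (n+1) - a ^ (n+1)) / ((n+1) * (b-a))|
    ≤ (n*(n-1)*(b-a)^2/16) * (1/(p+1)) ^ (1/p) * (1/(2*(q+2))) ^ (1/q) *
      ((b ^ (((n:ℝ)-2)*q) + ((q+3)/(q+1)) * a ^ (((n:ℝ)-2)*q)) ^ (1/q)
        + (((q+3)/(q+1)) * b ^ (((n:ℝ)-2)*q) + a ^ (((n:ℝ)-2)*q)) ^ (1/q)) := by
  have hpq' : p.HolderConjugate q :=
    Real.holderConjugate_iff.mpr ⟨hp, by simpa only [one_div] using hpq⟩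
  have hq : 1 < q := hpq'.symm.lt
  have hb : 0 < b := ha.trans hab
  have hc : 0 ≤ (q + 3) / (q + 1) := div_nonneg (by linarith) (by linarith)
  set C : ℝ := n * (n - 1)
  have hC : 0 ≤ C := mul_nonneg n.cast_nonneg (sub_nonneg.mpr (by norm_cast; omega))
  have hm : ((n - 2 : ℕ) : ℝ) = (n : ℝ) - 2 := by push_cast [Nat.cast_sub hn.le]; ring
  have hconv : ConvexOn ℝ (Icc a b) fun x ↦ |C * x ^ (n - 2)| ^ q :=
    (convexOn_abs_mul_pow_rpow hC
      (one_le_mul_of_one_le_of_one_le (by norm_cast; omega) hq.le)).subset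
        (Icc_subset_Ici_iff hab.le |>.mpr ha.le) (convex_Icc a b)
  have key := abs_midpoint_sub_average_le hab hpq' (fun x _ ↦ hasDerivAt_pow n x)
    (fun x _ ↦ hasDerivAt_natCast_mul_pow_pred (by omega) x) (by fun_prop) hconv
  rw [interval_average_pow, abs_mul_pow_rpow hC ha.le, abs_mul_pow_rpow hC hb.le, hm,
    mul_left_comm _ (C ^ q), mul_left_comm _ (C ^ q), ← mul_add, ← mul_add,
    rpow_mul_rpow_one_div hC (add_nonneg (by positivity) (mul_nonneg hc (by positivity)))
      (by linarith),
    rpow_mul_rpow_one_div hC (add_nonneg (mul_nonneg hc (by positivity)) (by positivity))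
      (by linarith)] at key
  convert key using 1
  ring

theorem stmt_19 (a b p q : ℝ) (n : ℕ) (ha : 0 < a) (hab : a < b) (hn : 2 < n)
    (hp : 1 < p) (hq : 1 < q) (hpq : 1/p + 1/q = 1) :
    |((a+b)/2) ^ n - (b ^ (n+1) - a ^ (n+1)) / ((n+1) * (b-a))|
    ≤ (n*(n-1)*(b-a)^2/16) * (1/(p+1)) ^ (1/p) * (1/(2*(q+2))) ^ (1/q) *
      ((b ^ (((n:ℝ)-2)*q) + ((q+3)/(q+1)) * a ^ (((n:ℝ)-2)*q)) ^ (1/q)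
        + (((q+3)/(q+1)) * b ^ (((n:ℝ)-2)*q) + a ^ (((n:ℝ)-2)*q)) ^ (1/q)) :=
  stmt_19_general a b p q n ha hab hn hp hpq
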